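/- In a digraph with no negative cycles, for all a b there is a simple path from a to b achieving the minimum walk weight (Floyd–Warshall correctness precondition). -/

import Mathlib

theorem walk_shortening (n : ℕ) (w : Fin n → Fin n → ℝ)
    (hcyc : ∀ (k : ℕ) (v : ℕ → Fin n), 1 ≤ k → v k = v 0 →
      (∀ s t, s < k → t < k → v s = v t → s = t) →
      0 ≤ ∑ t ∈ Finset.range k, w (v t) (v (t + 1)))
    (a b : Fin n) (k : ℕ) (v : ℕ → Fin n) (hva : v 0 = a) (hvb : v k = b) :
    ∃ (m : ℕ) (u : ℕ → Fin n), u 0 = a ∧ u m = b ∧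
      (∀ s t, s ≤ m → t ≤ m → u s = u t → s = t) ∧
      ∑ t ∈ Finset.range m, w (u t) (u (t + 1)) ≤
        ∑ t ∈ Finset.range k, w (v t) (v (t + 1)) := by
  classical
  induction k using Nat.strong_induction_on generalizing v hva with
  | _ k IH =>
  by_cases hinj : ∀ s t, s ≤ k → t ≤ k → v s = v t → s = t
  · exact ⟨k, v, hva, hvb, hinj, le_refl _⟩
  push_neg at hinj
  obtain ⟨s0, t0, hs0, ht0, heq0, hne0⟩ := hinj
  have hex : ∃ t, t ≤ k ∧ ∃ s, s < t ∧ v s = v t := by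
    rcases Ne.lt_or_gt hne0 with h | h
    · exact ⟨t0, ht0, s0, h, heq0⟩
    · exact ⟨s0, hs0, t0, h, heq0.symm⟩
  set j := Nat.find hex with hjdef
  obtain ⟨hjk, i, hij, hvij⟩ := Nat.find_spec hex
  have hmin : ∀ s t, s < j → t < j → v s = v t → s = t := by
    intro s t hs ht hvst
    by_contra hne
    rcases (Ne.lt_or_gt hne) with h | h
    · exact Nat.find_min hex ht ⟨le_trans ht.le hjk, s, h, hvst⟩
    · exact Nat.find_min hex hs ⟨le_trans hs.le hjk, t, h, hvst.symm⟩
  set d := j - i with hd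
  have hd1 : 1 ≤ d := by omega
  have hid : i + d = j := by omega
  have hcyc0 : 0 ≤ ∑ t ∈ Finset.range d, w (v (i + t)) (v (i + t + 1)) := by
    have := hcyc d (fun t => v (i + t)) hd1
      (by show v (i + d) = v (i + 0); rw [hid]; simpa using hvij.symm)
      (by
        intro s t hs ht h
        have := hmin (i + s) (i + t) (by omega) (by omega) h
        omega)
    simpa [add_assoc] using this
  set m := k - d with hm
  have him : i ≤ m := by omega
  have hmd : m + d = k := by omega
  set u : ℕ → Fin n := fun t => if t < i then v t else v (t + d) with hu
  have hu0 : u 0 = a := by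
    by_cases h0 : 0 < i
    · simpa [hu, h0] using hva
    · have hi0 : i = 0 := by omega
      have : u 0 = v d := by simp [hu, hi0]
      rw [this]
      have : d = j := by omega
      rw [this, ← hvij, hi0, hva]
  have hum : u m = b := by
    have : u m = v (m + d) := by simp [hu, Nat.not_lt.mpr him]
    rw [this, hmd, hvb]
  have hedge1 : ∀ t, t < i → w (u t) (u (t + 1)) = w (v t) (v (t + 1)) := by
    intro t ht
    have h1 : u t = v t := if_pos ht
    have h2 : u (t + 1) = v (t + 1) := by
      by_cases h : t + 1 < i
      · exact if_pos h
      · have hti : t + 1 = i := by omega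
        have : u (t + 1) = v (t + 1 + d) := if_neg h
        rw [this]
        have : t + 1 + d = j := by omega
        rw [this, ← hvij, hti]
    rw [h1, h2]
  have hedge2 : ∀ t, i ≤ t → w (u t) (u (t + 1)) = w (v (t + d)) (v (t + d + 1)) := by
    intro t ht
    have h1 : u t = v (t + d) := if_neg (by omega)
    have h2 : u (t + 1) = v (t + d + 1) := by
      have : u (t + 1) = v (t + 1 + d) := if_neg (by omega)
      rw [this]
      congr 1
      omega
    rw [h1, h2]
  have A : ∑ t ∈ Finset.range m, w (u t) (u (t + 1)) =
      ∑ t ∈ Finset.range i, w (v t) (v (t + 1)) +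
        ∑ t ∈ Finset.Ico j k, w (v t) (v (t + 1)) := by
    rw [Finset.range_eq_Ico, ← Finset.sum_Ico_consecutive _ (Nat.zero_le i) him,
      ← Finset.range_eq_Ico]
    congr 1
    · exact Finset.sum_congr rfl fun t ht => hedge1 t (Finset.mem_range.mp ht)
    · rw [Finset.sum_Ico_eq_sum_range, Finset.sum_Ico_eq_sum_range]
      have hmi : m - i = k - j := by omega
      rw [hmi]
      apply Finset.sum_congr rfl
      intro t _
      rw [hedge2 (i + t) (by omega)]
      have e1 : i + t + d = j + t := by omega
      rw [e1]
  have B : ∑ t ∈ Finset.range k, w (v t) (v (t + 1)) =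
      (∑ t ∈ Finset.range i, w (v t) (v (t + 1)) +
        ∑ t ∈ Finset.range d, w (v (i + t)) (v (i + t + 1))) +
        ∑ t ∈ Finset.Ico j k, w (v t) (v (t + 1)) := by
    rw [Finset.range_eq_Ico, ← Finset.sum_Ico_consecutive _ (Nat.zero_le j) hjk,
      ← Finset.sum_Ico_consecutive _ (Nat.zero_le i) (by omega : i ≤ j),
      ← Finset.range_eq_Ico]
    congr 1
    rw [Finset.sum_Ico_eq_sum_range, ← hd]
  obtain ⟨m', u', h1, h2, h3, h4⟩ := IH m (by omega) u hu0 hum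
  refine ⟨m', u', h1, h2, h3, ?_⟩
  have : ∑ t ∈ Finset.range m, w (u t) (u (t + 1)) ≤
      ∑ t ∈ Finset.range k, w (v t) (v (t + 1)) := by
    rw [A, B]; linarith
  linarith
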